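/- Let 1 < p ≤ θ. Then the polynomial L has exactly one root in the open interval (2, ∞); that is, there exists a unique real number s₀ > 2 with L(s₀) = 0. -/
import Mathlib


noncomputable section

/-- The quartic polynomial `L`. -/
def Lpoly (p θ s : ℝ) : ℝ :=
  s ^ 4 - (16 * p * θ * (p + 1) / (θ + 1)) * s ^ 2
    + (16 * p * θ * (p + 1) * (p + θ + 2) / (θ + 1) ^ 2) * s
    - 16 * p * θ * (p + 1) ^ 2 / (θ + 1) ^ 2

open Polynomial in
lemma quartic_no_five_roots (a b c : ℝ) (x₁ x₂ x₃ x₄ x₅ : ℝ)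
    (hne : x₁ ≠ x₂ ∧ x₁ ≠ x₃ ∧ x₁ ≠ x₄ ∧ x₁ ≠ x₅ ∧ x₂ ≠ x₃ ∧ x₂ ≠ x₄ ∧ x₂ ≠ x₅ ∧
      x₃ ≠ x₄ ∧ x₃ ≠ x₅ ∧ x₄ ≠ x₅)
    (h : ∀ x ∈ ({x₁, x₂, x₃, x₄, x₅} : Finset ℝ), x ^ 4 - a * x ^ 2 + b * x - c = 0) :
    False := by
  obtain ⟨h12, h13, h14, h15, h23, h24, h25, h34, h35, h45⟩ := hne
  set P : ℝ[X] := X ^ 4 - C a * X ^ 2 + C b * X - C c with hP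
  have hdeg : P.natDegree = 4 := by
    rw [hP]; compute_degree!
  have hP0 : P ≠ 0 := by
    intro h0; rw [h0] at hdeg; simp at hdeg
  have hsub : ({x₁, x₂, x₃, x₄, x₅} : Finset ℝ).val ⊆ P.roots := by
    intro z hz
    rw [Polynomial.mem_roots hP0]
    have hz' : z = x₁ ∨ z = x₂ ∨ z = x₃ ∨ z = x₄ ∨ z = x₅ := by
      simpa using hz
    have hz0 : z ^ 4 - a * z ^ 2 + b * z - c = 0 := by
      apply h; simpa using hz'
    simp only [Polynomial.IsRoot, hP, Polynomial.eval_sub, Polynomial.eval_add,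
      Polynomial.eval_mul, Polynomial.eval_pow, Polynomial.eval_X, Polynomial.eval_C]
    linarith
  have hle := Polynomial.card_le_degree_of_subset_roots hsub
  rw [hdeg] at hle
  have hcard5 : ({x₁, x₂, x₃, x₄, x₅} : Finset ℝ).card = 5 := by
    rw [Finset.card_insert_of_notMem (by simp [h12, h13, h14, h15]),
      Finset.card_insert_of_notMem (by simp [h23, h24, h25]),
      Finset.card_insert_of_notMem (by simp [h34, h35]),
      Finset.card_insert_of_notMem (by simp [h45]), Finset.card_singleton]
  omega

set_option maxHeartbeats 1000000 in
/-- `L` has exactly one root in `(2, ∞)`. -/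
theorem stmt10 (p θ : ℝ) (hp : 1 < p) (hpθ : p ≤ θ) :
    ∃! s₀ : ℝ, 2 < s₀ ∧ Lpoly p θ s₀ = 0 := by
  have hθ : 1 < θ := lt_of_lt_of_le hp hpθ
  have hp0 : (0:ℝ) < p := by linarith
  have hθ0 : (0:ℝ) < θ := by linarith
  have hθ1 : (0:ℝ) < θ + 1 := by linarith
  have hθ1' : (θ + 1 : ℝ) ≠ 0 := ne_of_gt hθ1
  obtain ⟨a, ha_def⟩ : ∃ x : ℝ, x = 16 * p * θ * (p + 1) / (θ + 1) := ⟨_, rfl⟩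
  obtain ⟨b, hb_def⟩ : ∃ x : ℝ, x = 16 * p * θ * (p + 1) * (p + θ + 2) / (θ + 1) ^ 2 := ⟨_, rfl⟩
  obtain ⟨c, hc_def⟩ : ∃ x : ℝ, x = 16 * p * θ * (p + 1) ^ 2 / (θ + 1) ^ 2 := ⟨_, rfl⟩
  have hLform : ∀ s : ℝ, Lpoly p θ s = s ^ 4 - a * s ^ 2 + b * s - c := by
    intro s
    unfold Lpoly
    rw [ha_def, hb_def, hc_def]
  have ha : 0 < a := by rw [ha_def]; positivity
  have hb : 0 < b := by rw [hb_def]; positivity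
  have hc : 0 < c := by rw [hc_def]; positivity
  -- sign values
  have hL1 : Lpoly p θ 1 = 1 := by
    rw [hLform, ha_def, hb_def, hc_def]
    field_simp
    ring
  have hL0 : Lpoly p θ 0 < 0 := by
    rw [hLform]
    simpa using hc
  have hL2 : Lpoly p θ 2 < 0 := by
    rw [hLform, ha_def, hb_def, hc_def]
    rw [show (2:ℝ) ^ 4 - 16 * p * θ * (p + 1) / (θ + 1) * 2 ^ 2
        + 16 * p * θ * (p + 1) * (p + θ + 2) / (θ + 1) ^ 2 * 2
        - 16 * p * θ * (p + 1) ^ 2 / (θ + 1) ^ 2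
        = (16 * (θ + 1) ^ 2 - 16 * p * θ * (p + 1) * (2 * θ + 1 - p)) / (θ + 1) ^ 2 by
      field_simp; ring]
    apply div_neg_of_neg_of_pos _ (by positivity)
    have e1 : (2:ℝ) ≤ p * (p + 1) := by nlinarith
    have e2 : θ * (θ + 1) ≤ θ * (2 * θ + 1 - p) := by nlinarith
    have e3 : (0:ℝ) < θ * (θ + 1) := by positivity
    have big : 2 * (θ * (θ + 1)) ≤ (p * (p + 1)) * (θ * (2 * θ + 1 - p)) := by
      calc 2 * (θ * (θ + 1)) ≤ (p * (p + 1)) * (θ * (θ + 1)) := by nlinarith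
        _ ≤ (p * (p + 1)) * (θ * (2 * θ + 1 - p)) := by nlinarith
    nlinarith [big]
  have hLm2 : Lpoly p θ (-2) < 0 := by
    rw [hLform, ha_def, hb_def, hc_def]
    rw [show (-2:ℝ) ^ 4 - 16 * p * θ * (p + 1) / (θ + 1) * (-2) ^ 2
        + 16 * p * θ * (p + 1) * (p + θ + 2) / (θ + 1) ^ 2 * (-2)
        - 16 * p * θ * (p + 1) ^ 2 / (θ + 1) ^ 2
        = (16 * (θ + 1) ^ 2 - 16 * p * θ * (p + 1) * (3 * p + 6 * θ + 9)) / (θ + 1) ^ 2 by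
      field_simp; ring]
    apply div_neg_of_neg_of_pos _ (by positivity)
    have e1 : (2:ℝ) ≤ p * (p + 1) := by nlinarith
    have e2 : θ * (θ + 1) ≤ θ * (3 * p + 6 * θ + 9) := by nlinarith
    have e3 : (0:ℝ) < θ * (θ + 1) := by positivity
    have big : 2 * (θ * (θ + 1)) ≤ (p * (p + 1)) * (θ * (3 * p + 6 * θ + 9)) := by
      calc 2 * (θ * (θ + 1)) ≤ (p * (p + 1)) * (θ * (θ + 1)) := by nlinarith
        _ ≤ (p * (p + 1)) * (θ * (3 * p + 6 * θ + 9)) := by nlinarith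
    nlinarith [big]
  -- a large value where L is positive at ±M
  clear ha_def hb_def hc_def hθ1'
  obtain ⟨M, hM_def⟩ : ∃ x : ℝ, x = a + b + c + 2 := ⟨_, rfl⟩
  have hM2 : (2:ℝ) ≤ M := by linarith
  have hMpos : (0:ℝ) < M := by linarith
  have q1 : a * M ^ 2 ≤ M ^ 3 := by
    nlinarith [mul_nonneg (show (0:ℝ) ≤ M - a by linarith)
      (mul_nonneg hMpos.le hMpos.le)]
  have q2 : M ^ 4 - M ^ 3 ≥ M ^ 3 := by
    nlinarith [mul_nonneg (mul_nonneg (mul_nonneg hMpos.le hMpos.le) hMpos.le)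
      (show (0:ℝ) ≤ M - 2 by linarith)]
  have q3 : M ^ 3 ≥ M := by
    nlinarith [mul_nonneg hMpos.le (show (0:ℝ) ≤ M ^ 2 - 1 by nlinarith)]
  have q4 : M ^ 3 ≥ M ^ 2 := by
    nlinarith [mul_nonneg (mul_nonneg hMpos.le hMpos.le)
      (show (0:ℝ) ≤ M - 1 by linarith)]
  have q5 : M ^ 2 ≥ (b + c + 2) * M := by
    nlinarith [mul_nonneg (show (0:ℝ) ≤ M - (b + c + 2) by linarith) hMpos.le]
  have q6 : c * M ≥ c := by
    nlinarith [mul_nonneg hc.le (show (0:ℝ) ≤ M - 1 by linarith)]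
  have hLM : 0 < Lpoly p θ M := by
    rw [hLform]
    nlinarith [mul_pos hb hMpos]
  have hLmM : 0 < Lpoly p θ (-M) := by
    rw [hLform]
    nlinarith [mul_pos hb hMpos]
  -- continuity
  have hcont : Continuous (Lpoly p θ) := by
    unfold Lpoly
    fun_prop
  -- four roots via IVT
  obtain ⟨r₁, hr₁mem, hr₁⟩ := intermediate_value_Ioo' (by linarith : -M ≤ -2)
    hcont.continuousOn (by rw [Set.mem_Ioo]; exact ⟨hLm2, hLmM⟩)
  obtain ⟨r₂, hr₂mem, hr₂⟩ := intermediate_value_Ioo (by norm_num : (0:ℝ) ≤ 1)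
    hcont.continuousOn (by rw [Set.mem_Ioo, hL1]; exact ⟨hL0, by norm_num⟩)
  obtain ⟨r₃, hr₃mem, hr₃⟩ := intermediate_value_Ioo' (by norm_num : (1:ℝ) ≤ 2)
    hcont.continuousOn (by rw [Set.mem_Ioo, hL1]; exact ⟨hL2, by norm_num⟩)
  obtain ⟨r₄, hr₄mem, hr₄⟩ := intermediate_value_Ioo (by linarith : (2:ℝ) ≤ M)
    hcont.continuousOn (by rw [Set.mem_Ioo]; exact ⟨hL2, hLM⟩)
  obtain ⟨hr₁l, hr₁r⟩ := hr₁mem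
  obtain ⟨hr₂l, hr₂r⟩ := hr₂mem
  obtain ⟨hr₃l, hr₃r⟩ := hr₃mem
  obtain ⟨hr₄l, hr₄r⟩ := hr₄mem
  refine ⟨r₄, ⟨hr₄l, hr₄⟩, ?_⟩
  rintro y ⟨hy2, hy0⟩
  by_contra hne
  refine quartic_no_five_roots a b c r₁ r₂ r₃ r₄ y
    ⟨by linarith, by linarith, by linarith, by linarith, by linarith, by linarith,
     by linarith, by linarith, by linarith, fun h => hne h.symm⟩ ?_
  intro x hx
  simp only [Finset.mem_insert, Finset.mem_singleton] at hx
  rcases hx with rfl | rfl | rfl | rfl | rfl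
  · rw [← hLform]; exact hr₁
  · rw [← hLform]; exact hr₂
  · rw [← hLform]; exact hr₃
  · rw [← hLform]; exact hr₄
  · rw [← hLform]; exact hy0
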